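/- arXiv:2508.10610 — 4 statements merged into one kernel-verified Lean document; each statement's English description precedes it below -/
import Mathlib

section
/- Let D_n = (d_{ij}) be a sequence of n×n deterministic matrices with entries in {0,1} satisfying the density condition. Fix k ≥ 1 and ordered pairs (a_1,b_1), …, (a_k,b_k) of elements of {1,…,k+1} with a_t ≠ b_t for all t, such that the undirected graph on {1,…,k+1} with edges {a_t,b_t} is a tree. Then lim_{n→∞} n^{−(k+1)} Σ over all functions j : {1,…,k+1} → {1,…,n} of Π_{t=1}^k d_{j(a_t), j(b_t)} = 1. -/
open MeasureTheory ProbabilityTheory Filter Matrix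

-- product of 0/1 values is bounded below by 1 - sum of (1 - x)
lemma aux_prod_lb {ι : Type*} [Fintype ι] (x : ι → ℝ)
    (hx : ∀ t, x t = 0 ∨ x t = 1) :
    1 - ∑ t, (1 - x t) ≤ ∏ t, x t := by
  by_cases h : ∀ t, x t = 1
  · simp [h]
  · push_neg at h
    obtain ⟨s, hs⟩ := h
    have hs0 : x s = 0 := (hx s).resolve_right hs
    have hprod : ∏ t, x t = 0 := Finset.prod_eq_zero (Finset.mem_univ s) hs0
    have hsum : (1 : ℝ) ≤ ∑ t, (1 - x t) := by
      have := Finset.single_le_sum (f := fun t => 1 - x t)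
        (fun t _ => by rcases hx t with h | h <;> simp [h]) (Finset.mem_univ s)
      simpa [hs0] using this
    linarith

-- fiber cardinality bound
lemma aux_fiber_card {k n : ℕ} {A B : Fin (k+1)} (hAB : A ≠ B) (p : Fin n × Fin n) :
    (Finset.univ.filter fun j : Fin (k+1) → Fin n => (j A, j B) = p).card ≤ n ^ (k - 1) := by
  classical
  have hcard : Fintype.card {x : Fin (k+1) // x ≠ A ∧ x ≠ B} = k - 1 := by
    rw [Fintype.card_subtype]
    have : (Finset.univ.filter fun x : Fin (k+1) => x ≠ A ∧ x ≠ B)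
        = ({A, B} : Finset (Fin (k+1)))ᶜ := by
      ext x; simp [not_or]
    rw [this, Finset.card_compl, Finset.card_insert_of_notMem (by simpa using hAB)]
    simp
  have hle : (Finset.univ.filter fun j : Fin (k+1) → Fin n => (j A, j B) = p).card
      ≤ Fintype.card ({x : Fin (k+1) // x ≠ A ∧ x ≠ B} → Fin n) := by
    rw [← Finset.card_univ]
    apply Finset.card_le_card_of_injOn (fun j => fun x : {x : Fin (k+1) // x ≠ A ∧ x ≠ B} => j x)
      (fun _ _ => Finset.mem_univ _)
    intro j1 h1 j2 h2 he
    simp only [Finset.mem_coe, Finset.mem_filter, Prod.ext_iff] at h1 h2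
    funext x
    by_cases hxA : x = A
    · rw [hxA, h1.2.1, h2.2.1]
    by_cases hxB : x = B
    · rw [hxB, h1.2.2, h2.2.2]
    · exact congrFun he ⟨x, hxA, hxB⟩
  calc _ ≤ _ := hle
    _ = n ^ (k-1) := by rw [Fintype.card_fun, hcard, Fintype.card_fin]

-- sum over functions bound
lemma aux_sum_fn {k n : ℕ} {A B : Fin (k+1)} (hAB : A ≠ B) (g : Fin n → Fin n → ℝ)
    (hg : ∀ i i', 0 ≤ g i i') :
    ∑ j : Fin (k+1) → Fin n, g (j A) (j B) ≤ (n : ℝ) ^ (k - 1) * ∑ i, ∑ i', g i i' := by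
  classical
  have := Finset.sum_fiberwise (Finset.univ : Finset (Fin (k+1) → Fin n))
    (fun j => (j A, j B)) (fun j => g (j A) (j B))
  rw [← this]
  have step : ∀ p : Fin n × Fin n,
      (∑ j ∈ Finset.univ.filter fun j : Fin (k+1) → Fin n => (j A, j B) = p,
        g (j A) (j B)) ≤ (n : ℝ) ^ (k-1) * g p.1 p.2 := by
    intro p
    have : ∀ j ∈ Finset.univ.filter fun j : Fin (k+1) → Fin n => (j A, j B) = p,
        g (j A) (j B) = g p.1 p.2 := by
      intro j hj
      simp only [Finset.mem_filter, Prod.ext_iff] at hj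
      rw [hj.2.1, hj.2.2]
    rw [Finset.sum_congr rfl this, Finset.sum_const, nsmul_eq_mul]
    apply mul_le_mul_of_nonneg_right _ (hg _ _)
    exact_mod_cast Nat.cast_le.mpr (aux_fiber_card hAB p)
  calc ∑ p : Fin n × Fin n, _ ≤ ∑ p : Fin n × Fin n, (n:ℝ)^(k-1) * g p.1 p.2 :=
        Finset.sum_le_sum (fun p _ => step p)
    _ = (n:ℝ)^(k-1) * ∑ i, ∑ i', g i i' := by
        rw [← Finset.mul_sum, Fintype.sum_prod_type]

/-- equation (2) of the paper: the normalised tree-indexed sums of entries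
of 0-1 matrices satisfying the density condition converge to 1. -/
theorem stmt_3 (D : (n : ℕ) → Matrix (Fin n) (Fin n) ℝ)
    (h01 : ∀ n, ∀ i j : Fin n, D n i j = 0 ∨ D n i j = 1)
    (hden : Tendsto (fun n : ℕ => (∑ i, ∑ j, D n i j) / (n : ℝ) ^ 2) atTop (nhds 1))
    (k : ℕ) (hk : 1 ≤ k)
    (a b : Fin k → Fin (k + 1))
    (hab : ∀ t, a t ≠ b t)
    (htree : (SimpleGraph.fromEdgeSet (Set.range fun t => s(a t, b t))).IsTree) :
    Tendsto (fun n : ℕ =>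
        (∑ j : Fin (k + 1) → Fin n, ∏ t : Fin k, D n (j (a t)) (j (b t))) / (n : ℝ) ^ (k + 1))
      atTop (nhds 1) := by
  classical
  set S : ℕ → ℝ := fun n => ∑ j : Fin (k + 1) → Fin n, ∏ t : Fin k, D n (j (a t)) (j (b t))
    with hS
  -- lower bound sequence
  have hL : Tendsto (fun n : ℕ => 1 - (k : ℝ) * (1 - (∑ i, ∑ j, D n i j) / (n : ℝ) ^ 2))
      atTop (nhds 1) := by
    have : Tendsto (fun n : ℕ => 1 - (k : ℝ) * (1 - (∑ i, ∑ j, D n i j) / (n : ℝ) ^ 2))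
        atTop (nhds (1 - (k:ℝ) * (1 - 1))) :=
      (tendsto_const_nhds.sub ((tendsto_const_nhds.sub hden).const_mul _))
    simpa using this
  apply tendsto_of_tendsto_of_tendsto_of_le_of_le' hL tendsto_const_nhds
  · -- lower bound eventually
    filter_upwards [eventually_ge_atTop 1] with n hn
    have hnpos : (0:ℝ) < (n:ℝ) := by exact_mod_cast hn
    -- pointwise product lower bound
    have hpt : ∀ j : Fin (k+1) → Fin n,
        1 - ∑ t : Fin k, (1 - D n (j (a t)) (j (b t))) ≤ ∏ t : Fin k, D n (j (a t)) (j (b t)) :=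
      fun j => aux_prod_lb _ (fun t => h01 n _ _)
    have hsumlb : (n:ℝ)^(k+1) - ∑ t : Fin k, ∑ j : Fin (k+1) → Fin n,
        (1 - D n (j (a t)) (j (b t))) ≤ S n := by
      have h1 : ∑ j : Fin (k+1) → Fin n,
          (1 - ∑ t : Fin k, (1 - D n (j (a t)) (j (b t)))) ≤ S n :=
        Finset.sum_le_sum (fun j _ => hpt j)
      have h2 : ∑ j : Fin (k+1) → Fin n,
          (1 - ∑ t : Fin k, (1 - D n (j (a t)) (j (b t))))
          = (n:ℝ)^(k+1) - ∑ t : Fin k, ∑ j : Fin (k+1) → Fin n,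
            (1 - D n (j (a t)) (j (b t))) := by
        rw [Finset.sum_sub_distrib, Finset.sum_const, Finset.sum_comm]
        simp [Fintype.card_fun, mul_comm]
      linarith [h1, h2.symm.le]
    -- bound each t-sum
    set E : ℝ := ∑ i : Fin n, ∑ i' : Fin n, (1 - D n i i') with hE
    have hEt : ∀ t : Fin k, ∑ j : Fin (k+1) → Fin n, (1 - D n (j (a t)) (j (b t)))
        ≤ (n:ℝ)^(k-1) * E := by
      intro t
      exact aux_sum_fn (hab t) (fun i i' => 1 - D n i i')
        (fun i i' => by rcases h01 n i i' with h | h <;> simp [h])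
    have htot : (n:ℝ)^(k+1) - (k:ℝ) * ((n:ℝ)^(k-1) * E) ≤ S n := by
      have : ∑ t : Fin k, ∑ j : Fin (k+1) → Fin n, (1 - D n (j (a t)) (j (b t)))
          ≤ ∑ t : Fin k, (n:ℝ)^(k-1) * E := Finset.sum_le_sum (fun t _ => hEt t)
      simp only [Finset.sum_const, Finset.card_univ, Fintype.card_fin, nsmul_eq_mul] at this
      linarith [hsumlb]
    -- E = n² - ΣD
    have hEeq : E = (n:ℝ)^2 - ∑ i, ∑ j, D n i j := by
      rw [hE]
      simp [Finset.sum_sub_distrib, sq]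
    -- now divide
    obtain ⟨m, rfl⟩ : ∃ m, k = m + 1 := ⟨k - 1, by omega⟩
    have hpow : (n:ℝ)^(m+1+1) = (n:ℝ)^m * (n:ℝ)^2 := by ring
    have hpos : (0:ℝ) < (n:ℝ)^(m+1+1) := pow_pos hnpos _
    have hgoal : (1 - ((m:ℝ)+1) * (1 - (∑ i, ∑ j, D n i j) / (n : ℝ) ^ 2)) * (n:ℝ)^(m+1+1)
        ≤ S n := by
      have hksub : ((m+1 : ℕ) : ℝ) = (m:ℝ)+1 := by push_cast; ring
      have h1 : (1 - ((m:ℝ)+1) * (1 - (∑ i, ∑ j, D n i j) / (n : ℝ) ^ 2)) * (n:ℝ)^(m+1+1)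
          = (n:ℝ)^(m+1+1) - ((m:ℝ)+1) * ((n:ℝ)^m * ((n:ℝ)^2 - ∑ i, ∑ j, D n i j)) := by
        field_simp
        ring
      rw [h1, ← hEeq]
      have hms : (m+1) - 1 = m := by omega
      rw [hms] at htot
      calc (n:ℝ)^(m+1+1) - ((m:ℝ)+1) * ((n:ℝ)^m * E)
          = (n:ℝ)^(m+1+1) - (((m+1:ℕ)):ℝ) * ((n:ℝ)^m * E) := by rw [hksub]
        _ ≤ S n := htot
    calc (1 - ((m+1:ℕ):ℝ) * (1 - (∑ i, ∑ j, D n i j) / (n : ℝ) ^ 2))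
        ≤ S n / (n:ℝ)^(m+1+1) := by
          rw [le_div_iff₀ hpos]
          convert hgoal using 2
          case e'_2 => rfl
          push_cast; ring
      _ = _ := rfl
  · -- upper bound
    filter_upwards [eventually_ge_atTop 1] with n hn
    have hnpos : (0:ℝ) < (n:ℝ) := by exact_mod_cast hn
    have hub : S n ≤ (n:ℝ)^(k+1) := by
      calc S n ≤ ∑ j : Fin (k+1) → Fin n, (1:ℝ) := by
            apply Finset.sum_le_sum
            intro j _
            apply Finset.prod_le_one
            · intro t _; rcases h01 n (j (a t)) (j (b t)) with h | h <;> simp [h]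
            · intro t _; rcases h01 n (j (a t)) (j (b t)) with h | h <;> simp [h]
        _ = (n:ℝ)^(k+1) := by simp [Fintype.card_fun]
    rw [div_le_one (by positivity)]
    exact hub
end

section
/- Let D_n^{(1)}, …, D_n^{(m)} be sequences of n×n deterministic matrices, each with entries in {0,1} and each satisfying the density condition. Fix k ≥ 1, a labeling τ : {1,…,k} → {1,…,m}, and ordered pairs (a_1,b_1), …, (a_k,b_k) of elements of {1,…,k+1} with a_t ≠ b_t, such that the undirected graph on {1,…,k+1} with edges {a_t,b_t} is a tree. Then lim_{n→∞} n^{−(k+1)} Σ over all functions j : {1,…,k+1} → {1,…,n} of Π_{t=1}^k d^{(τ(t))}_{j(a_t), j(b_t)} = 1. -/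
open MeasureTheory ProbabilityTheory Filter Matrix

lemma sum_eval1 {α β : Type*} [Fintype α] [Fintype β] [DecidableEq α]
    (c : α) (f : β → ℝ) :
    ∑ r : α → β, f (r c) = (Fintype.card β : ℝ) ^ (Fintype.card α - 1) * ∑ y, f y := by
  rw [← Equiv.sum_comp (Equiv.funSplitAt c β).symm (fun r => f (r c))]
  simp only [Equiv.funSplitAt_symm_apply, dif_pos rfl]
  rw [Fintype.sum_prod_type]
  simp [Finset.sum_const, Finset.card_univ, Fintype.card_fun,
    Fintype.card_subtype_compl, Fintype.card_subtype_eq, Finset.mul_sum,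
    nsmul_eq_mul, mul_comm, Finset.sum_mul]

lemma sum_eval2 {α β : Type*} [Fintype α] [Fintype β] [DecidableEq α]
    (c c' : α) (h : c' ≠ c) (g : β → β → ℝ) :
    ∑ r : α → β, g (r c) (r c')
      = (Fintype.card β : ℝ) ^ (Fintype.card α - 2) * ∑ x, ∑ y, g x y := by
  rw [← Equiv.sum_comp (Equiv.funSplitAt c β).symm (fun r => g (r c) (r c'))]
  simp only [Equiv.funSplitAt_symm_apply, dif_pos rfl, dif_neg h, dite_true]
  rw [Fintype.sum_prod_type]
  have hcard : Fintype.card {j : α // j ≠ c} = Fintype.card α - 1 := by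
    simp [Fintype.card_subtype_compl, Fintype.card_subtype_eq]
  have step : ∀ x : β, ∑ r : {j : α // j ≠ c} → β, g x (r ⟨c', h⟩)
      = (Fintype.card β : ℝ) ^ (Fintype.card {j : α // j ≠ c} - 1) * ∑ y, g x y :=
    fun x => sum_eval1 (⟨c', h⟩ : {j : α // j ≠ c}) (g x)
  rw [Finset.sum_congr rfl fun x _ => step x, ← Finset.mul_sum, hcard,
    show Fintype.card α - 1 - 1 = Fintype.card α - 2 by omega]

lemma weier {ι : Type*} (s : Finset ι) (f : ι → ℝ) (h0 : ∀ i ∈ s, 0 ≤ f i)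
    (h1 : ∀ i ∈ s, f i ≤ 1) :
    1 - ∑ i ∈ s, (1 - f i) ≤ ∏ i ∈ s, f i := by
  classical
  induction s using Finset.cons_induction with
  | empty => simp
  | cons i s hi ih =>
    rw [Finset.prod_cons, Finset.sum_cons]
    have hs0 : ∀ j ∈ s, 0 ≤ f j := fun j hj => h0 j (Finset.mem_cons_of_mem hj)
    have hs1 : ∀ j ∈ s, f j ≤ 1 := fun j hj => h1 j (Finset.mem_cons_of_mem hj)
    have IH := ih hs0 hs1
    have hsum : 0 ≤ ∑ j ∈ s, (1 - f j) :=
      Finset.sum_nonneg fun j hj => by linarith [hs1 j hj]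
    have hfi0 : 0 ≤ f i := h0 i (Finset.mem_cons_self _ _)
    have hfi1 : f i ≤ 1 := h1 i (Finset.mem_cons_self _ _)
    nlinarith [mul_le_mul_of_nonneg_left IH hfi0]


/-- the normalised tree-indexed sums of entries of several 0-1 matrices, each
satisfying the density condition, with factors labelled by `τ : Fin k → Fin m`, converge to 1. -/
theorem stmt_4 (m : ℕ) (D : Fin m → (n : ℕ) → Matrix (Fin n) (Fin n) ℝ)
    (h01 : ∀ l, ∀ n, ∀ i j : Fin n, D l n i j = 0 ∨ D l n i j = 1)
    (hden : ∀ l, Tendsto (fun n : ℕ => (∑ i, ∑ j, D l n i j) / (n : ℝ) ^ 2) atTop (nhds 1))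
    (k : ℕ) (hk : 1 ≤ k) (τ : Fin k → Fin m)
    (a b : Fin k → Fin (k + 1))
    (hab : ∀ t, a t ≠ b t)
    (htree : (SimpleGraph.fromEdgeSet (Set.range fun t => s(a t, b t))).IsTree) :
    Tendsto (fun n : ℕ =>
        (∑ j : Fin (k + 1) → Fin n, ∏ t : Fin k, D (τ t) n (j (a t)) (j (b t))) /
          (n : ℝ) ^ (k + 1))
      atTop (nhds 1) := by
  have hD0 : ∀ l n (i j : Fin n), 0 ≤ D l n i j := fun l n i j => by
    rcases h01 l n i j with h | h <;> rw [h] <;> norm_num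
  have hD1 : ∀ l n (i j : Fin n), D l n i j ≤ 1 := fun l n i j => by
    rcases h01 l n i j with h | h <;> rw [h] <;> norm_num
  have hL : Tendsto (fun n : ℕ =>
      1 - ∑ t : Fin k, (1 - (∑ i, ∑ j, D (τ t) n i j) / (n : ℝ) ^ 2)) atTop (nhds 1) := by
    have h2 : Tendsto (fun n : ℕ =>
        ∑ t : Fin k, (1 - (∑ i, ∑ j, D (τ t) n i j) / (n : ℝ) ^ 2)) atTop
        (nhds (∑ _t : Fin k, (1 - 1 : ℝ))) :=
      tendsto_finset_sum _ (fun t _ => tendsto_const_nhds.sub (hden (τ t)))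
    have h3 := tendsto_const_nhds.sub (f := fun _ : ℕ => (1:ℝ)) h2
    simpa using h3
  apply tendsto_of_tendsto_of_tendsto_of_le_of_le' hL tendsto_const_nhds
  · -- lower bound, eventually
    filter_upwards [eventually_ge_atTop 1] with n hn
    have hpow : (0:ℝ) < (n:ℝ) ^ (k + 1) := by
      have : (0:ℝ) < (n:ℝ) := by exact_mod_cast hn
      positivity
    rw [le_div_iff₀ hpow]
    have key : ∀ t : Fin k,
        ∑ j : Fin (k + 1) → Fin n, (1 - D (τ t) n (j (a t)) (j (b t)))
          = (n:ℝ) ^ (k - 1) * ((n:ℝ) ^ 2 - ∑ i, ∑ j', D (τ t) n i j') := by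
      intro t
      rw [sum_eval2 (a t) (b t) (hab t).symm (fun x y => 1 - D (τ t) n x y)]
      congr 1
      · rw [Fintype.card_fin, Fintype.card_fin,
          show k + 1 - 2 = k - 1 from by omega]
      · simp only [Finset.sum_sub_distrib, Finset.sum_const, Finset.card_univ,
          Fintype.card_fin, nsmul_eq_mul, mul_one]
        ring
    have hstep1 : ∑ j : Fin (k + 1) → Fin n,
          (1 - ∑ t : Fin k, (1 - D (τ t) n (j (a t)) (j (b t))))
        ≤ ∑ j : Fin (k + 1) → Fin n, ∏ t : Fin k, D (τ t) n (j (a t)) (j (b t)) :=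
      Finset.sum_le_sum fun j _ =>
        weier Finset.univ _ (fun t _ => hD0 _ _ _ _) (fun t _ => hD1 _ _ _ _)
    refine le_trans ?_ hstep1
    have hcount : ∑ _j : Fin (k + 1) → Fin n, (1:ℝ) = (n:ℝ) ^ (k + 1) := by
      simp [Finset.sum_const, Finset.card_univ, Fintype.card_fun]
    have hRHS : ∑ j : Fin (k + 1) → Fin n,
          (1 - ∑ t : Fin k, (1 - D (τ t) n (j (a t)) (j (b t))))
        = (n:ℝ) ^ (k + 1) - ∑ t : Fin k,
            (n:ℝ) ^ (k - 1) * ((n:ℝ) ^ 2 - ∑ i, ∑ j', D (τ t) n i j') := by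
      rw [Finset.sum_sub_distrib, Finset.sum_comm,
        Finset.sum_congr rfl fun t _ => key t, hcount]
    rw [hRHS]
    have hterm : ∀ t : Fin k,
        (1 - (∑ i, ∑ j', D (τ t) n i j') / (n:ℝ) ^ 2) * (n:ℝ) ^ (k + 1)
          = (n:ℝ) ^ (k - 1) * ((n:ℝ) ^ 2 - ∑ i, ∑ j', D (τ t) n i j') := by
      intro t
      have hn2 : ((n:ℝ) ^ 2) ≠ 0 := by
        have : (0:ℝ) < (n:ℝ) := by exact_mod_cast hn
        positivity
      have hpowsplit : (n:ℝ) ^ (k + 1) = (n:ℝ) ^ (k - 1) * (n:ℝ) ^ 2 := by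
        rw [← pow_add]; congr 1; omega
      rw [hpowsplit]; field_simp
    rw [sub_mul, one_mul, Finset.sum_mul,
      Finset.sum_congr rfl fun t _ => hterm t]
  · -- upper bound
    filter_upwards with n
    apply div_le_one_of_le₀
    · calc (∑ j : Fin (k + 1) → Fin n, ∏ t : Fin k, D (τ t) n (j (a t)) (j (b t)))
          ≤ ∑ _j : Fin (k + 1) → Fin n, (1:ℝ) :=
            Finset.sum_le_sum fun j _ =>
              Finset.prod_le_one (fun t _ => hD0 _ _ _ _) (fun t _ => hD1 _ _ _ _)
        _ = (n:ℝ) ^ (k + 1) := by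
            simp [Finset.sum_const, Finset.card_univ, Fintype.card_fun]
    · positivity
end

section
/- Let X_n^{(1)} and X_n^{(2)} be two mutually independent sequences of n×n real random matrices, each satisfying Assumption 1 with parameter ρ = 0, and let D_n^{(1)}, D_n^{(2)} be n×n deterministic matrices with entries in {0,1}, each satisfying the density condition. Set Y_n^{(l)} = D_n^{(l)} ⊙ X_n^{(l)} for l = 1, 2. Then lim_{n→∞} n^{−3} E[Tr(Y_n^{(1)} Y_n^{(2)} (Y_n^{(1)})ᵀ (Y_n^{(2)})ᵀ)] = 0. -/
open MeasureTheory ProbabilityTheory Filter Matrix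

/-- Assumption 1 of the paper, with parameter `ρ`: for each `n`, the diagonal entries
together with the pairs `(x_{ij}, x_{ji})`, `i < j`, form an independent family (encoded by
pairing every entry with its transposed entry, indexed by positions `(i, j)` with `i ≤ j`);
all entries are centred with unit second moment, `E[x_{ij} x_{ji}] = ρ` for `i ≠ j`, and all
absolute moments are bounded uniformly in `i, j, n`. -/
def Assumption1 {Ω : Type} [MeasureSpace Ω]
    (X : (n : ℕ) → Ω → Matrix (Fin n) (Fin n) ℝ) (ρ : ℝ) : Prop :=
  (∀ n, ∀ i j : Fin n, Measurable fun ω => X n ω i j) ∧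
  (∀ n, iIndepFun
      (fun (q : {q : Fin n × Fin n // q.1 ≤ q.2}) ω => ((X n ω q.1.1 q.1.2, X n ω q.1.2 q.1.1) : ℝ × ℝ)) ℙ) ∧
  (∀ n, ∀ i j : Fin n, ∫ ω, X n ω i j = 0) ∧
  (∀ n, ∀ i j : Fin n, ∫ ω, (X n ω i j) ^ 2 = 1) ∧
  (∀ n, ∀ i j : Fin n, i ≠ j → ∫ ω, X n ω i j * X n ω j i = ρ) ∧
  (∀ k : ℕ, ∃ B : ℝ, ∀ n, ∀ i j : Fin n, ∫ ω, |X n ω i j| ^ k ≤ B)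

section AuxLemmas

variable {Ω : Type} [MeasureSpace Ω] [IsProbabilityMeasure (ℙ : Measure Ω)]
variable {X : (n : ℕ) → Ω → Matrix (Fin n) (Fin n) ℝ}

lemma aux_mem2 (hX : Assumption1 X 0) (n : ℕ) (i j : Fin n) :
    MemLp (fun ω => X n ω i j) 2 ℙ := by
  refine (memLp_two_iff_integrable_sq (hX.1 n i j).aestronglyMeasurable).2 ?_
  by_contra h
  have h1 := hX.2.2.2.1 n i j
  rw [integral_undef h] at h1
  norm_num at h1

lemma aux_int_pair (hX : Assumption1 X 0) (n : ℕ) (i j l k : Fin n) :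
    Integrable (fun ω => X n ω i j * X n ω l k) ℙ := by
  have h := ((aux_mem2 hX n l k).smul (aux_mem2 hX n i j)
    (p := 2) (q := 2) (r := 1) (hpqr := ⟨by rw [inv_one, ENNReal.inv_two_add_inv_two]⟩)).integrable le_rfl
  exact h

lemma aux_indep_entries {ρ : ℝ} (hX : Assumption1 X ρ) {n : ℕ} {i j l k : Fin n}
    (h1 : (i, j) ≠ (l, k)) (h2 : (i, j) ≠ (k, l)) :
    IndepFun (fun ω => X n ω i j) (fun ω => X n ω l k) ℙ := by
  have hI := hX.2.1 n
  simp only [ne_eq, Prod.mk.injEq, not_and_or] at h1 h2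
  rcases le_total i j with hij | hij <;> rcases le_total l k with hlk | hlk
  · have hq : (⟨(i, j), hij⟩ : {q : Fin n × Fin n // q.1 ≤ q.2}) ≠ ⟨(l, k), hlk⟩ := by
      simp only [ne_eq, Subtype.mk.injEq, Prod.mk.injEq, not_and_or]; exact h1
    exact (hI.indepFun hq).comp measurable_fst measurable_fst
  · have hq : (⟨(i, j), hij⟩ : {q : Fin n × Fin n // q.1 ≤ q.2}) ≠ ⟨(k, l), hlk⟩ := by
      simp only [ne_eq, Subtype.mk.injEq, Prod.mk.injEq, not_and_or]; exact h2
    exact (hI.indepFun hq).comp measurable_fst measurable_snd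
  · have hq : (⟨(j, i), hij⟩ : {q : Fin n × Fin n // q.1 ≤ q.2}) ≠ ⟨(l, k), hlk⟩ := by
      simp only [ne_eq, Subtype.mk.injEq, Prod.mk.injEq, not_and_or]; tauto
    exact (hI.indepFun hq).comp measurable_snd measurable_fst
  · have hq : (⟨(j, i), hij⟩ : {q : Fin n × Fin n // q.1 ≤ q.2}) ≠ ⟨(k, l), hlk⟩ := by
      simp only [ne_eq, Subtype.mk.injEq, Prod.mk.injEq, not_and_or]; tauto
    exact (hI.indepFun hq).comp measurable_snd measurable_snd

lemma aux_cov_zero (hX : Assumption1 X 0) {n : ℕ} {i j l k : Fin n}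
    (h : (i, j) ≠ (l, k)) :
    ∫ ω, X n ω i j * X n ω l k = 0 := by
  by_cases h2 : (i, j) = (k, l)
  · rw [Prod.ext_iff] at h2
    obtain ⟨rfl, rfl⟩ := h2
    exact hX.2.2.2.2.1 n i j (fun he => h (by rw [he]))
  · have hind := aux_indep_entries hX h h2
    have hv := hind.integral_mul_eq_mul_integral
      ((aux_mem2 hX n i j).integrable one_le_two).aestronglyMeasurable ((aux_mem2 hX n l k).integrable one_le_two).aestronglyMeasurable
    rw [show (fun ω => X n ω i j * X n ω l k) =
      (fun ω => X n ω i j) * (fun ω => X n ω l k) from rfl]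
    rw [show (∫ ω, ((fun ω => X n ω i j) * fun ω => X n ω l k) ω) =
      integral ℙ ((fun ω => X n ω i j) * fun ω => X n ω l k) from rfl, hv,
      hX.2.2.1 n i j, zero_mul]

lemma aux_cov_one (hX : Assumption1 X 0) {n : ℕ} (i j : Fin n) :
    ∫ ω, X n ω i j * X n ω i j = 1 := by
  simpa [pow_two] using hX.2.2.2.1 n i j

end AuxLemmas

/-- for `Y^{(l)} = D^{(l)} ⊙ X^{(l)}`, `l = 1, 2`, with mutually independent
ensembles each satisfying Assumption 1 with `ρ = 0` and 0-1 matrices `D^{(l)}` satisfying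
the density condition, the mixed moment `n^{-3} E[Tr(Y¹ Y² (Y¹)ᵀ (Y²)ᵀ)] → 0`
(matching `φ(c₁ c₂ c₁* c₂*) = 0` for free circular variables). -/
theorem stmt_16 {Ω : Type} [MeasureSpace Ω] [IsProbabilityMeasure (ℙ : Measure Ω)]
    (X1 X2 : (n : ℕ) → Ω → Matrix (Fin n) (Fin n) ℝ)
    (hX1 : Assumption1 X1 0) (hX2 : Assumption1 X2 0)
    (hindep : IndepFun
      (fun ω => (fun n (i j : Fin n) => X1 n ω i j : (n : ℕ) → Fin n → Fin n → ℝ))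
      (fun ω => (fun n (i j : Fin n) => X2 n ω i j : (n : ℕ) → Fin n → Fin n → ℝ)) ℙ)
    (D1 D2 : (n : ℕ) → Matrix (Fin n) (Fin n) ℝ)
    (h01a : ∀ n, ∀ i j : Fin n, D1 n i j = 0 ∨ D1 n i j = 1)
    (h01b : ∀ n, ∀ i j : Fin n, D2 n i j = 0 ∨ D2 n i j = 1)
    (hden1 : Tendsto (fun n : ℕ => (∑ i, ∑ j, D1 n i j) / (n : ℝ) ^ 2) atTop (nhds 1))
    (hden2 : Tendsto (fun n : ℕ => (∑ i, ∑ j, D2 n i j) / (n : ℝ) ^ 2) atTop (nhds 1)) :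
    Tendsto (fun n : ℕ =>
        (∫ ω, Matrix.trace
            ((D1 n).hadamard (X1 n ω) * (D2 n).hadamard (X2 n ω) *
              ((D1 n).hadamard (X1 n ω))ᵀ * ((D2 n).hadamard (X2 n ω))ᵀ)) / (n : ℝ) ^ 3)
      atTop (nhds 0) := by
  have heval : ∀ (m : ℕ) (a b : Fin m),
      Measurable (fun F : (∀ m', Fin m' → Fin m' → ℝ) => F m a b) :=
    fun m a b =>
      (measurable_pi_apply b).comp ((measurable_pi_apply a).comp (measurable_pi_apply m))
  have key : ∀ n : ℕ,
      |∫ ω, Matrix.trace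
          ((D1 n).hadamard (X1 n ω) * (D2 n).hadamard (X2 n ω) *
            ((D1 n).hadamard (X1 n ω))ᵀ * ((D2 n).hadamard (X2 n ω))ᵀ)| ≤ (n : ℝ) := by
    intro n
    have hfg : ∀ i x y z : Fin n,
        IndepFun (fun ω => X1 n ω i z * X1 n ω x y) (fun ω => X2 n ω z y * X2 n ω i x) ℙ :=
      fun i x y z =>
        hindep.comp ((heval n i z).mul (heval n x y)) ((heval n z y).mul (heval n i x))
    have hTr : (fun ω => Matrix.trace
          ((D1 n).hadamard (X1 n ω) * (D2 n).hadamard (X2 n ω) *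
            ((D1 n).hadamard (X1 n ω))ᵀ * ((D2 n).hadamard (X2 n ω))ᵀ)) =
        fun ω => ∑ i, ∑ x, ∑ y, ∑ z,
          (D1 n i z * D2 n z y * D1 n x y * D2 n i x) *
            ((X1 n ω i z * X1 n ω x y) * (X2 n ω z y * X2 n ω i x)) := by
      funext ω
      simp only [Matrix.trace, Matrix.diag, Matrix.mul_apply, Matrix.transpose_apply,
        Matrix.hadamard_apply, Finset.sum_mul]
      refine Finset.sum_congr rfl fun i _ => Finset.sum_congr rfl fun x _ =>
        Finset.sum_congr rfl fun y _ => Finset.sum_congr rfl fun z _ => by ring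
    have hIntT : ∀ i x y z : Fin n, Integrable (fun ω =>
        (D1 n i z * D2 n z y * D1 n x y * D2 n i x) *
          ((X1 n ω i z * X1 n ω x y) * (X2 n ω z y * X2 n ω i x))) ℙ :=
      fun i x y z =>
        (((hfg i x y z).integrable_mul (aux_int_pair hX1 n i z x y)
          (aux_int_pair hX2 n z y i x)).const_mul _)
    have hval : ∀ i x y z : Fin n,
        (∫ ω, (D1 n i z * D2 n z y * D1 n x y * D2 n i x) *
          ((X1 n ω i z * X1 n ω x y) * (X2 n ω z y * X2 n ω i x))) =
        (D1 n i z * D2 n z y * D1 n x y * D2 n i x) *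
          ((∫ ω, X1 n ω i z * X1 n ω x y) * (∫ ω, X2 n ω z y * X2 n ω i x)) := by
      intro i x y z
      rw [integral_const_mul]
      congr 1
      exact (hfg i x y z).integral_mul_eq_mul_integral
        (aux_int_pair hX1 n i z x y).aestronglyMeasurable (aux_int_pair hX2 n z y i x).aestronglyMeasurable
    rw [hTr]
    have hsplit : (∫ ω, ∑ i, ∑ x, ∑ y, ∑ z,
        (D1 n i z * D2 n z y * D1 n x y * D2 n i x) *
          ((X1 n ω i z * X1 n ω x y) * (X2 n ω z y * X2 n ω i x)))
        = ∑ i, ∑ x, ∑ y, ∑ z, ∫ ω,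
          (D1 n i z * D2 n z y * D1 n x y * D2 n i x) *
            ((X1 n ω i z * X1 n ω x y) * (X2 n ω z y * X2 n ω i x)) := by
      rw [integral_finset_sum _ (fun i _ => integrable_finset_sum _ (fun x _ =>
        integrable_finset_sum _ (fun y _ => integrable_finset_sum _ (fun z _ =>
          hIntT i x y z))))]
      refine Finset.sum_congr rfl fun i _ => ?_
      rw [integral_finset_sum _ (fun x _ => integrable_finset_sum _ (fun y _ =>
        integrable_finset_sum _ (fun z _ => hIntT i x y z)))]
      refine Finset.sum_congr rfl fun x _ => ?_
      rw [integral_finset_sum _ (fun y _ => integrable_finset_sum _ (fun z _ =>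
        hIntT i x y z))]
      refine Finset.sum_congr rfl fun y _ => ?_
      rw [integral_finset_sum _ (fun z _ => hIntT i x y z)]
    rw [hsplit]
    have hbound : ∀ i x y z : Fin n,
        |∫ ω, (D1 n i z * D2 n z y * D1 n x y * D2 n i x) *
          ((X1 n ω i z * X1 n ω x y) * (X2 n ω z y * X2 n ω i x))|
        ≤ if x = i then if y = i then if z = i then (1:ℝ) else 0 else 0 else 0 := by
      intro i x y z
      rw [hval i x y z]
      by_cases hall : x = i ∧ y = i ∧ z = i
      · obtain ⟨hx, hy, hz⟩ := hall
        simp only [hx, hy, hz, if_pos rfl]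
        rw [aux_cov_one hX1, aux_cov_one hX2, mul_one, mul_one]
        rcases h01a n i i with h1 | h1 <;> rcases h01b n i i with h2 | h2 <;>
          simp [h1, h2]
      · have h0 : ((i, z) ≠ (x, y)) ∨ ((z, y) ≠ (i, x)) := by
          by_contra hc
          push_neg at hc
          obtain ⟨hc1, hc2⟩ := hc
          rw [Prod.mk.injEq] at hc1 hc2
          exact hall ⟨hc1.1.symm, hc2.2.trans hc1.1.symm, hc2.1⟩
        have hnn : (0:ℝ) ≤ if x = i then if y = i then if z = i then (1:ℝ) else 0 else 0 else 0 := by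
          split_ifs <;> norm_num
        rcases h0 with h0 | h0
        · rw [aux_cov_zero hX1 h0, zero_mul, mul_zero, abs_zero]; exact hnn
        · rw [aux_cov_zero hX2 h0, mul_zero, mul_zero, abs_zero]; exact hnn
    calc |∑ i : Fin n, ∑ x, ∑ y, ∑ z, ∫ ω,
          (D1 n i z * D2 n z y * D1 n x y * D2 n i x) *
            ((X1 n ω i z * X1 n ω x y) * (X2 n ω z y * X2 n ω i x))|
        ≤ ∑ i : Fin n, ∑ x, ∑ y, ∑ z,
            (if x = i then if y = i then if z = i then (1:ℝ) else 0 else 0 else 0) := by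
          refine (Finset.abs_sum_le_sum_abs _ _).trans (Finset.sum_le_sum fun i _ => ?_)
          refine (Finset.abs_sum_le_sum_abs _ _).trans (Finset.sum_le_sum fun x _ => ?_)
          refine (Finset.abs_sum_le_sum_abs _ _).trans (Finset.sum_le_sum fun y _ => ?_)
          refine (Finset.abs_sum_le_sum_abs _ _).trans (Finset.sum_le_sum fun z _ => ?_)
          exact hbound i x y z
      _ = (n : ℝ) := by
          simp [Finset.sum_ite_eq']
  have hg : Tendsto (fun n : ℕ => (n : ℝ) / (n : ℝ) ^ 3) atTop (nhds 0) := by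
    have he : (fun n : ℕ => (n : ℝ) / (n : ℝ) ^ 3) =ᶠ[atTop] fun n : ℕ => ((n : ℝ) ^ 2)⁻¹ := by
      filter_upwards [eventually_ge_atTop 1] with n hn
      have hn0 : (n : ℝ) ≠ 0 := Nat.cast_ne_zero.2 (by omega)
      field_simp
    rw [tendsto_congr' he]
    exact Tendsto.inv_tendsto_atTop
      ((tendsto_pow_atTop (two_ne_zero)).comp tendsto_natCast_atTop_atTop)
  refine squeeze_zero_norm (fun n => ?_) hg
  rw [Real.norm_eq_abs, abs_div, abs_pow, Nat.abs_cast]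
  rcases Nat.eq_zero_or_pos n with rfl | hn
  · simp
  · exact (div_le_div_iff_of_pos_right (by positivity)).2 (key n)
end

section
/- Let X_n^{(1)} and X_n^{(2)} be two mutually independent sequences of n×n real random matrices, each satisfying Assumption 1 with parameter ρ = 0, and let D_n^{(1)}, D_n^{(2)} be n×n deterministic matrices with entries in {0,1}, each satisfying the density condition. Set Y_n^{(l)} = D_n^{(l)} ⊙ X_n^{(l)} for l = 1, 2. Then lim_{n→∞} n^{−3} E[Tr(Y_n^{(1)} (Y_n^{(1)})ᵀ Y_n^{(2)} (Y_n^{(2)})ᵀ)] = 1. -/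
open MeasureTheory ProbabilityTheory Filter Matrix

/-- An entry with unit second moment is in `L²`. -/
lemma aux_memL2 {Ω : Type} [MeasureSpace Ω] {f : Ω → ℝ} (hm : Measurable f)
    (h2 : ∫ ω, f ω ^ 2 = 1) : MemLp f 2 ℙ := by
  have hint : Integrable (fun ω => f ω ^ 2) ℙ := by
    by_contra h; rw [integral_undef h] at h2; norm_num at h2
  exact (memLp_two_iff_integrable_sq hm.aestronglyMeasurable).2 hint

/-- Product of two `L²` random variables is integrable. -/
lemma aux_mulInt {Ω : Type} [MeasureSpace Ω] {f g : Ω → ℝ}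
    (hf : MemLp f 2 ℙ) (hg : MemLp g 2 ℙ) :
    Integrable (fun ω => f ω * g ω) ℙ := by
  have h : MemLp (f • g) 1 ℙ := hg.smul hf
  rw [memLp_one_iff_integrable] at h
  exact h

/-- Two distinct entries of the same column of a matrix satisfying Assumption 1 with `ρ = 0`
are uncorrelated. -/
lemma aux_covZero {Ω : Type} [MeasureSpace Ω] [IsProbabilityMeasure (ℙ : Measure Ω)]
    {X : (n : ℕ) → Ω → Matrix (Fin n) (Fin n) ℝ} (hX : Assumption1 X 0)
    (n : ℕ) (i j k : Fin n) (hik : i ≠ k) :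
    ∫ ω, X n ω i j * X n ω k j = 0 := by
  obtain ⟨hm, hind, hmean, -, -, -⟩ := hX
  have hindep : IndepFun (fun ω => X n ω i j) (fun ω => X n ω k j) ℙ := by
    rcases le_total i j with hij | hij <;> rcases le_total k j with hkj | hkj
    · have hq : (⟨(i,j), hij⟩ : {q : Fin n × Fin n // q.1 ≤ q.2}) ≠ ⟨(k,j), hkj⟩ := by
        intro h
        exact hik (by simpa using congrArg (fun q => q.1.1) h)
      exact ((hind n).indepFun hq).comp measurable_fst measurable_fst
    · have hq : (⟨(i,j), hij⟩ : {q : Fin n × Fin n // q.1 ≤ q.2}) ≠ ⟨(j,k), hkj⟩ := by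
        intro h
        have h1 : i = j := by simpa using congrArg (fun q => q.1.1) h
        have h2 : j = k := by simpa using congrArg (fun q => q.1.2) h
        exact hik (h1.trans h2)
      exact ((hind n).indepFun hq).comp measurable_fst measurable_snd
    · have hq : (⟨(j,i), hij⟩ : {q : Fin n × Fin n // q.1 ≤ q.2}) ≠ ⟨(k,j), hkj⟩ := by
        intro h
        have h1 : j = k := by simpa using congrArg (fun q => q.1.1) h
        have h2 : i = j := by simpa using congrArg (fun q => q.1.2) h
        exact hik (h2.trans h1)
      exact ((hind n).indepFun hq).comp measurable_snd measurable_fst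
    · have hq : (⟨(j,i), hij⟩ : {q : Fin n × Fin n // q.1 ≤ q.2}) ≠ ⟨(j,k), hkj⟩ := by
        intro h
        exact hik (by simpa using congrArg (fun q => q.1.2) h)
      exact ((hind n).indepFun hq).comp measurable_snd measurable_snd
  rw [hindep.integral_fun_mul_eq_mul_integral (hm n i j).aestronglyMeasurable (hm n k j).aestronglyMeasurable,
    hmean n i j, hmean n k j, mul_zero]

/-- for `Y^{(l)} = D^{(l)} ⊙ X^{(l)}`, `l = 1, 2`, with mutually independent
ensembles each satisfying Assumption 1 with `ρ = 0` and 0-1 matrices `D^{(l)}` satisfying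
the density condition, the mixed moment `n^{-3} E[Tr(Y¹ (Y¹)ᵀ Y² (Y²)ᵀ)] → 1`
(matching `φ(c₁ c₁* c₂ c₂*) = 1` for free circular variables). -/
theorem stmt_17 {Ω : Type} [MeasureSpace Ω] [IsProbabilityMeasure (ℙ : Measure Ω)]
    (X1 X2 : (n : ℕ) → Ω → Matrix (Fin n) (Fin n) ℝ)
    (hX1 : Assumption1 X1 0) (hX2 : Assumption1 X2 0)
    (hindep : IndepFun
      (fun ω => (fun n (i j : Fin n) => X1 n ω i j : (n : ℕ) → Fin n → Fin n → ℝ))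
      (fun ω => (fun n (i j : Fin n) => X2 n ω i j : (n : ℕ) → Fin n → Fin n → ℝ)) ℙ)
    (D1 D2 : (n : ℕ) → Matrix (Fin n) (Fin n) ℝ)
    (h01a : ∀ n, ∀ i j : Fin n, D1 n i j = 0 ∨ D1 n i j = 1)
    (h01b : ∀ n, ∀ i j : Fin n, D2 n i j = 0 ∨ D2 n i j = 1)
    (hden1 : Tendsto (fun n : ℕ => (∑ i, ∑ j, D1 n i j) / (n : ℝ) ^ 2) atTop (nhds 1))
    (hden2 : Tendsto (fun n : ℕ => (∑ i, ∑ j, D2 n i j) / (n : ℝ) ^ 2) atTop (nhds 1)) :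
    Tendsto (fun n : ℕ =>
        (∫ ω, Matrix.trace
            ((D1 n).hadamard (X1 n ω) * ((D1 n).hadamard (X1 n ω))ᵀ *
              ((D2 n).hadamard (X2 n ω)) * ((D2 n).hadamard (X2 n ω))ᵀ)) / (n : ℝ) ^ 3)
      atTop (nhds 1) := by
  obtain ⟨hm1, -, -, hsq1, -, -⟩ := id hX1
  obtain ⟨hm2, -, -, hsq2, -, -⟩ := id hX2
  have hL1 : ∀ n (i j : Fin n), MemLp (fun ω => X1 n ω i j) 2 ℙ :=
    fun n i j => aux_memL2 (hm1 n i j) (hsq1 n i j)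
  have hL2 : ∀ n (i j : Fin n), MemLp (fun ω => X2 n ω i j) 2 ℙ :=
    fun n i j => aux_memL2 (hm2 n i j) (hsq2 n i j)
  have heval : ∀ n (a b : Fin n),
      Measurable (fun f : (m : ℕ) → Fin m → Fin m → ℝ => f n a b) :=
    fun n a b => (measurable_pi_apply b).comp ((measurable_pi_apply a).comp (measurable_pi_apply n))
  -- exact value of the expectation
  have key : ∀ n : ℕ,
      (∫ ω, Matrix.trace
          ((D1 n).hadamard (X1 n ω) * ((D1 n).hadamard (X1 n ω))ᵀ *
            ((D2 n).hadamard (X2 n ω)) * ((D2 n).hadamard (X2 n ω))ᵀ)) =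
        ∑ i, (∑ j, D1 n i j) * (∑ l, D2 n i l) := by
    intro n
    set T : Fin n → Fin n → Fin n → Fin n → Ω → ℝ := fun i l k j ω =>
      D1 n i j * X1 n ω i j * (D1 n k j * X1 n ω k j) *
        (D2 n k l * X2 n ω k l * (D2 n i l * X2 n ω i l)) with hT
    have hexp : ∀ ω : Ω, Matrix.trace
        ((D1 n).hadamard (X1 n ω) * ((D1 n).hadamard (X1 n ω))ᵀ *
          ((D2 n).hadamard (X2 n ω)) * ((D2 n).hadamard (X2 n ω))ᵀ) =
        ∑ i, ∑ l, ∑ k, ∑ j, T i l k j ω := by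
      intro ω
      simp only [hT, Matrix.trace, Matrix.diag, Matrix.mul_apply, Matrix.transpose_apply,
        Matrix.hadamard_apply, Finset.sum_mul]
      exact Finset.sum_congr rfl fun i _ => Finset.sum_congr rfl fun l _ =>
        Finset.sum_congr rfl fun k _ => Finset.sum_congr rfl fun j _ => by ring
    have gind : ∀ i j k l : Fin n,
        IndepFun (fun ω => X1 n ω i j * X1 n ω k j) (fun ω => X2 n ω k l * X2 n ω i l) ℙ :=
      fun i j k l =>
        hindep.comp ((heval n i j).mul (heval n k j)) ((heval n k l).mul (heval n i l))
    have g1int : ∀ i j k : Fin n, Integrable (fun ω => X1 n ω i j * X1 n ω k j) ℙ :=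
      fun i j k => aux_mulInt (hL1 n i j) (hL1 n k j)
    have g2int : ∀ k l i : Fin n, Integrable (fun ω => X2 n ω k l * X2 n ω i l) ℙ :=
      fun k l i => aux_mulInt (hL2 n k l) (hL2 n i l)
    have hTint : ∀ i l k j : Fin n, Integrable (T i l k j) ℙ := by
      intro i l k j
      have h := ((gind i j k l).integrable_mul (g1int i j k) (g2int k l i)).const_mul
        (D1 n i j * D1 n k j * (D2 n k l * D2 n i l))
      refine h.congr (Filter.Eventually.of_forall fun ω => ?_)
      simp only [hT, Pi.mul_apply]
      ring
    have hTval : ∀ i l k j : Fin n,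
        (∫ ω, T i l k j ω) = if k = i then D1 n i j * D2 n i l else 0 := by
      intro i l k j
      have e : (fun ω => T i l k j ω) = fun ω =>
          D1 n i j * D1 n k j * (D2 n k l * D2 n i l) *
            (X1 n ω i j * X1 n ω k j * (X2 n ω k l * X2 n ω i l)) := by
        funext ω; simp only [hT]; ring
      rw [e, integral_const_mul,
        (gind i j k l).integral_fun_mul_eq_mul_integral ((hm1 n i j).mul (hm1 n k j)).aestronglyMeasurable
          ((hm2 n k l).mul (hm2 n i l)).aestronglyMeasurable]
      by_cases hk : k = i
      · subst hk
        rw [if_pos rfl]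
        have e1 : (∫ ω, X1 n ω k j * X1 n ω k j) = 1 := by
          rw [show (fun ω => X1 n ω k j * X1 n ω k j) = fun ω => X1 n ω k j ^ 2 from
            funext fun ω => by ring]
          exact hsq1 n k j
        have e2 : (∫ ω, X2 n ω k l * X2 n ω k l) = 1 := by
          rw [show (fun ω => X2 n ω k l * X2 n ω k l) = fun ω => X2 n ω k l ^ 2 from
            funext fun ω => by ring]
          exact hsq2 n k l
        rw [e1, e2]
        rcases h01a n k j with h | h <;> rcases h01b n k l with h' | h' <;>
          rw [h, h'] <;> ring
      · rw [if_neg hk, aux_covZero hX1 n i j k (fun h => hk h.symm)]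
        ring
    have swap : (∫ ω, ∑ i, ∑ l, ∑ k, ∑ j, T i l k j ω) =
        ∑ i, ∑ l, ∑ k, ∑ j, ∫ ω, T i l k j ω := by
      rw [integral_finset_sum _ fun i _ => integrable_finset_sum _ fun l _ =>
        integrable_finset_sum _ fun k _ => integrable_finset_sum _ fun j _ => hTint i l k j]
      refine Finset.sum_congr rfl fun i _ => ?_
      rw [integral_finset_sum _ fun l _ => integrable_finset_sum _ fun k _ =>
        integrable_finset_sum _ fun j _ => hTint i l k j]
      refine Finset.sum_congr rfl fun l _ => ?_
      rw [integral_finset_sum _ fun k _ => integrable_finset_sum _ fun j _ => hTint i l k j]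
      refine Finset.sum_congr rfl fun k _ => ?_
      rw [integral_finset_sum _ fun j _ => hTint i l k j]
    calc (∫ ω, Matrix.trace
            ((D1 n).hadamard (X1 n ω) * ((D1 n).hadamard (X1 n ω))ᵀ *
              ((D2 n).hadamard (X2 n ω)) * ((D2 n).hadamard (X2 n ω))ᵀ))
        = ∫ ω, ∑ i, ∑ l, ∑ k, ∑ j, T i l k j ω :=
          integral_congr_ae (Filter.Eventually.of_forall hexp)
      _ = ∑ i, ∑ l, ∑ k, ∑ j, ∫ ω, T i l k j ω := swap
      _ = ∑ i, ∑ l, ∑ k, ∑ j, (if k = i then D1 n i j * D2 n i l else 0) :=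
          Finset.sum_congr rfl fun i _ => Finset.sum_congr rfl fun l _ =>
            Finset.sum_congr rfl fun k _ => Finset.sum_congr rfl fun j _ => hTval i l k j
      _ = ∑ i, (∑ j, D1 n i j) * (∑ l, D2 n i l) := by
          refine Finset.sum_congr rfl fun i _ => ?_
          have hstep : ∀ l : Fin n,
              (∑ k, ∑ j, if k = i then D1 n i j * D2 n i l else 0) =
                (∑ j, D1 n i j) * D2 n i l := by
            intro l
            rw [Finset.sum_eq_single i]
            · simp [Finset.sum_mul]
            · intro k _ hk; simp [hk]
            · intro h; exact absurd (Finset.mem_univ i) h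
          simp only [hstep]
          exact (Finset.mul_sum _ _ _).symm
  -- reduce to the deterministic limit
  have hfun : (fun n : ℕ =>
      (∫ ω, Matrix.trace
          ((D1 n).hadamard (X1 n ω) * ((D1 n).hadamard (X1 n ω))ᵀ *
            ((D2 n).hadamard (X2 n ω)) * ((D2 n).hadamard (X2 n ω))ᵀ)) / (n : ℝ) ^ 3) =
      fun n : ℕ => (∑ i, (∑ j, D1 n i j) * (∑ l, D2 n i l)) / (n : ℝ) ^ 3 :=
    funext fun n => by rw [key n]
  rw [hfun]
  have hg : Tendsto (fun n : ℕ =>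
      (∑ i, ∑ j, D1 n i j) / (n : ℝ) ^ 2 + (∑ i, ∑ j, D2 n i j) / (n : ℝ) ^ 2 - 1)
      atTop (nhds 1) := by
    have h2 := (hden1.add hden2).sub_const 1
    norm_num at h2
    exact h2
  refine tendsto_of_tendsto_of_tendsto_of_le_of_le' hg hden1 ?_ ?_
  · -- lower bound
    filter_upwards [eventually_ge_atTop 1] with n hn
    have hnR : (1 : ℝ) ≤ (n : ℝ) := by exact_mod_cast hn
    have hn0 : (0 : ℝ) < (n : ℝ) := lt_of_lt_of_le one_pos hnR
    have hr1nn : ∀ i : Fin n, 0 ≤ ∑ j, D1 n i j := fun i =>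
      Finset.sum_nonneg fun j _ => by rcases h01a n i j with h | h <;> rw [h] <;> norm_num
    have hr2nn : ∀ i : Fin n, 0 ≤ ∑ l, D2 n i l := fun i =>
      Finset.sum_nonneg fun l _ => by rcases h01b n i l with h | h <;> rw [h] <;> norm_num
    have hr1le : ∀ i : Fin n, (∑ j, D1 n i j) ≤ (n : ℝ) := by
      intro i
      calc (∑ j, D1 n i j) ≤ ∑ _j : Fin n, (1 : ℝ) :=
            Finset.sum_le_sum fun j _ => by rcases h01a n i j with h | h <;> rw [h] <;> norm_num
        _ = (n : ℝ) := by simp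
    have hr2le : ∀ i : Fin n, (∑ l, D2 n i l) ≤ (n : ℝ) := by
      intro i
      calc (∑ l, D2 n i l) ≤ ∑ _l : Fin n, (1 : ℝ) :=
            Finset.sum_le_sum fun l _ => by rcases h01b n i l with h | h <;> rw [h] <;> norm_num
        _ = (n : ℝ) := by simp
    have enum : (∑ i, ∑ j, D1 n i j) / (n : ℝ) ^ 2 + (∑ i, ∑ j, D2 n i j) / (n : ℝ) ^ 2 - 1 =
        ((n : ℝ) * (∑ i, ∑ j, D1 n i j) + (n : ℝ) * (∑ i, ∑ j, D2 n i j) - (n : ℝ) ^ 3) /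
          (n : ℝ) ^ 3 := by
      field_simp
    rw [enum, div_le_div_iff_of_pos_right (by positivity)]
    have expand : (n : ℝ) * (∑ i, ∑ j, D1 n i j) + (n : ℝ) * (∑ i, ∑ j, D2 n i j) -
        (n : ℝ) ^ 3 = ∑ i : Fin n,
          ((n : ℝ) * (∑ j, D1 n i j) + (n : ℝ) * (∑ l, D2 n i l) - (n : ℝ) ^ 2) := by
      rw [Finset.sum_sub_distrib, Finset.sum_add_distrib, ← Finset.mul_sum, ← Finset.mul_sum,
        Finset.sum_const, Finset.card_univ, Fintype.card_fin]
      push_cast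
      ring
    rw [expand]
    refine Finset.sum_le_sum fun i _ => ?_
    nlinarith [mul_nonneg (sub_nonneg.2 (hr1le i)) (sub_nonneg.2 (hr2le i))]
  · -- upper bound
    filter_upwards [eventually_ge_atTop 1] with n hn
    have hnR : (1 : ℝ) ≤ (n : ℝ) := by exact_mod_cast hn
    have hn0 : (0 : ℝ) < (n : ℝ) := lt_of_lt_of_le one_pos hnR
    have hr1nn : ∀ i : Fin n, 0 ≤ ∑ j, D1 n i j := fun i =>
      Finset.sum_nonneg fun j _ => by rcases h01a n i j with h | h <;> rw [h] <;> norm_num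
    have hr2le : ∀ i : Fin n, (∑ l, D2 n i l) ≤ (n : ℝ) := by
      intro i
      calc (∑ l, D2 n i l) ≤ ∑ _l : Fin n, (1 : ℝ) :=
            Finset.sum_le_sum fun l _ => by rcases h01b n i l with h | h <;> rw [h] <;> norm_num
        _ = (n : ℝ) := by simp
    have enum : (∑ i, ∑ j, D1 n i j) / (n : ℝ) ^ 2 =
        ((n : ℝ) * (∑ i, ∑ j, D1 n i j)) / (n : ℝ) ^ 3 := by
      field_simp
    rw [enum, div_le_div_iff_of_pos_right (by positivity)]
    rw [Finset.mul_sum]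
    refine Finset.sum_le_sum fun i _ => ?_
    calc (∑ j, D1 n i j) * (∑ l, D2 n i l) ≤ (∑ j, D1 n i j) * (n : ℝ) :=
          mul_le_mul_of_nonneg_left (hr2le i) (hr1nn i)
      _ = (n : ℝ) * (∑ j, D1 n i j) := mul_comm _ _
end
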